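/- arXiv:2105.09200 — 6 statements merged into one kernel-verified Lean document; each statement's English description precedes it below -/
import Mathlib

section
/- Let A be a real symmetric invertible matrix with 3×3 block structure A = [[A_pp, A_qpᵀ, 0], [A_qp, A_qq, A_rqᵀ], [0, A_rq, A_rr]] (square diagonal blocks of sizes |p|, |q|, |r|), and suppose the block A_pp is invertible. Let G = A⁻¹ and let A₁ = [[A_qq − A_qp A_pp⁻¹ A_qpᵀ, A_rqᵀ], [A_rq, A_rr]] be the Schur complement of A_pp in A. Then A₁ is invertible, and with G₁ = A₁⁻¹ the leading diagonal block of G satisfies G_pp = A_pp⁻¹ + [−A_pp⁻¹A_qpᵀ, 0] · G₁ · [−A_pp⁻¹A_qpᵀ, 0]ᵀ, where [−A_pp⁻¹A_qpᵀ, 0] denotes the |p|×(|q|+|r|) block row whose q-block is −A_pp⁻¹A_qpᵀ and whose r-block is zero. -/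
open Matrix

/-!
Eliminating the `p`-block is one step of block Gaussian elimination for the partition
`p | (q ∪ r)`: with `C = [A_qp; 0]` the off-diagonal block, the Schur complement formula gives
`G_pp = A_pp⁻¹ + A_pp⁻¹ Cᵀ G₁ C A_pp⁻¹`, and `A₁ = A_{q∪r} - C A_pp⁻¹ Cᵀ` is invertible because
`A` and `A_pp` are. Symmetry of `A_pp` turns `C A_pp⁻¹` into `(A_pp⁻¹ Cᵀ)ᵀ`, and since the
`r`-rows of `C` vanish, the Schur complement differs from the trailing block only in its `qq`-block.
-/

namespace Matrix

section SchurComplement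

variable {m n α : Type*} [Fintype m] [Fintype n] [DecidableEq m] [DecidableEq n] [CommRing α]
  {A : Matrix m m α} {B : Matrix m n α} {C : Matrix n m α} {D : Matrix n n α}

theorem isUnit_schur_of_isUnit_fromBlocks (hA : IsUnit A) (h : IsUnit (fromBlocks A B C D)) :
    IsUnit (D - C * A⁻¹ * B) := by
  let := hA.invertible
  rw [← invOf_eq_nonsing_inv]
  exact isUnit_fromBlocks_iff_of_invertible₁₁.1 h

theorem toBlocks₁₁_inv_fromBlocks (hA : IsUnit A) (h : IsUnit (fromBlocks A B C D)) :
    (fromBlocks A B C D)⁻¹.toBlocks₁₁ = A⁻¹ + A⁻¹ * B * (D - C * A⁻¹ * B)⁻¹ * C * A⁻¹ := by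
  let := hA.invertible
  let := h.invertible
  let := invertibleOfFromBlocks₁₁Invertible A B C D
  have hinv := invOf_fromBlocks₁₁_eq A B C D
  simp only [invOf_eq_nonsing_inv] at hinv
  rw [hinv, toBlocks_fromBlocks₁₁]

theorem toBlocks₁₁_inv_fromBlocks_of_isSymm (hA : IsUnit A) (hsymm : A.IsSymm)
    (h : IsUnit (fromBlocks A Cᵀ C D)) :
    (fromBlocks A Cᵀ C D)⁻¹.toBlocks₁₁ =
      A⁻¹ + (A⁻¹ * Cᵀ) * (D - C * A⁻¹ * Cᵀ)⁻¹ * (A⁻¹ * Cᵀ)ᵀ := by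
  have hAinvT : (A⁻¹)ᵀ = A⁻¹ := by rw [transpose_nonsing_inv, hsymm.eq]
  rw [toBlocks₁₁_inv_fromBlocks hA h, transpose_mul, hAinvT, transpose_transpose]
  simp only [Matrix.mul_assoc]

end SchurComplement

theorem fromBlocks_sub_fromRows_zero_mul_mul_transpose {p q r α : Type*} [Fintype p]
    [CommRing α] (E : Matrix q p α) (F : Matrix p p α) (D₁₁ : Matrix q q α)
    (D₁₂ : Matrix q r α) (D₂₁ : Matrix r q α) (D₂₂ : Matrix r r α) :
    fromBlocks D₁₁ D₁₂ D₂₁ D₂₂ - fromRows E (0 : Matrix r p α) * F * (fromRows E 0)ᵀ =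
      fromBlocks (D₁₁ - E * F * Eᵀ) D₁₂ D₂₁ D₂₂ := by
  rw [transpose_fromRows, fromRows_mul, fromRows_mul_fromCols, sub_eq_add_neg, fromBlocks_neg,
    fromBlocks_add]
  simp [sub_eq_add_neg]

end Matrix

/-- Lemma 1 (selected inversion): for a symmetric invertible block matrix
`A = [[App, Aqpᵀ, 0], [Aqp, Aqq, Arqᵀ], [0, Arq, Arr]]` with `App` invertible,
the Schur complement `A₁` of `App` is invertible and
`G_pp = App⁻¹ + [-App⁻¹Aqpᵀ, 0] A₁⁻¹ [-App⁻¹Aqpᵀ, 0]ᵀ`. -/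
theorem stmt_0 (np nq nr : ℕ)
    (App : Matrix (Fin np) (Fin np) ℝ)
    (Aqp : Matrix (Fin nq) (Fin np) ℝ)
    (Aqq : Matrix (Fin nq) (Fin nq) ℝ)
    (Arq : Matrix (Fin nr) (Fin nq) ℝ)
    (Arr : Matrix (Fin nr) (Fin nr) ℝ)
    (A : Matrix (Fin np ⊕ (Fin nq ⊕ Fin nr)) (Fin np ⊕ (Fin nq ⊕ Fin nr)) ℝ)
    (hA : A = fromBlocks App (fromCols Aqpᵀ (0 : Matrix (Fin np) (Fin nr) ℝ))
        (fromRows Aqp (0 : Matrix (Fin nr) (Fin np) ℝ))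
        (fromBlocks Aqq Arqᵀ Arq Arr))
    (hsymm : A.IsSymm) (hAunit : IsUnit A) (hAppunit : IsUnit App)
    (A₁ : Matrix (Fin nq ⊕ Fin nr) (Fin nq ⊕ Fin nr) ℝ)
    (hA₁ : A₁ = fromBlocks (Aqq - Aqp * App⁻¹ * Aqpᵀ) Arqᵀ Arq Arr) :
    IsUnit A₁ ∧
      (A⁻¹).toBlocks₁₁ =
        App⁻¹ +
          (fromCols (-(App⁻¹ * Aqpᵀ)) (0 : Matrix (Fin np) (Fin nr) ℝ)) * A₁⁻¹ *
            (fromCols (-(App⁻¹ * Aqpᵀ)) (0 : Matrix (Fin np) (Fin nr) ℝ))ᵀ := by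
  have hCT : fromCols Aqpᵀ (0 : Matrix (Fin np) (Fin nr) ℝ) = (fromRows Aqp 0)ᵀ := by
    rw [transpose_fromRows, transpose_zero]
  have hAppsymm : App.IsSymm := (isSymm_fromBlocks_iff.1 (hA ▸ hsymm)).1
  have hschur :
      A₁ = fromBlocks Aqq Arqᵀ Arq Arr - fromRows Aqp 0 * App⁻¹ * (fromRows Aqp 0)ᵀ := by
    rw [hA₁, fromBlocks_sub_fromRows_zero_mul_mul_transpose]
  have hcol : fromCols (-(App⁻¹ * Aqpᵀ)) (0 : Matrix (Fin np) (Fin nr) ℝ) =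
      -(App⁻¹ * (fromRows Aqp 0)ᵀ) := by
    rw [← hCT, mul_fromCols, fromCols_neg, Matrix.mul_zero, neg_zero]
  rw [hCT] at hA
  subst hA
  rw [hschur, hcol, transpose_neg]
  simp only [Matrix.neg_mul, Matrix.mul_neg, neg_neg]
  exact ⟨isUnit_schur_of_isUnit_fromBlocks hAppunit hAunit,
    toBlocks₁₁_inv_fromBlocks_of_isSymm hAppunit hAppsymm hAunit⟩
end

section
/- Let A be a real symmetric invertible matrix with 3×3 block structure A = [[A_pp, A_qpᵀ, 0], [A_qp, A_qq, A_rqᵀ], [0, A_rq, A_rr]], with A_pp invertible, let G = A⁻¹, let A₁ = [[A_qq − A_qp A_pp⁻¹ A_qpᵀ, A_rqᵀ], [A_rq, A_rr]] be the Schur complement of A_pp, and let G₁ = A₁⁻¹. Then G_pp depends only on the qq-block of G₁; explicitly, G_pp = A_pp⁻¹ + (A_pp⁻¹A_qpᵀ) (G₁)_qq (A_qp A_pp⁻¹), where (G₁)_qq is the |q|×|q| leading diagonal block of G₁. -/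
/-!
Eliminating the `p`-block of `A` by the Schur complement formula gives
`G_pp = App⁻¹ + App⁻¹ B (D - C App⁻¹ B)⁻¹ C App⁻¹`, where `B = [Aqpᵀ 0]` and `C = [Aqp; 0]` are
the off-diagonal blocks and `D` is the `(q ⊕ r)`-block. The complement `D - C App⁻¹ B` is `A₁`,
and since `B` and `C` vanish on the `r`-rows and columns, `B G₁ C` only sees `(G₁)_qq`.
-/

open Matrix

namespace Matrix

variable {α k l m n o p : Type*}

theorem inv_fromBlocks_toBlocks₁₁_of_isUnit [Fintype m] [Fintype n] [DecidableEq m]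
    [DecidableEq n] [CommRing α] (P : Matrix m m α) (B : Matrix m n α) (C : Matrix n m α)
    (D : Matrix n n α) (hP : IsUnit P) (hM : IsUnit (fromBlocks P B C D)) :
    (fromBlocks P B C D)⁻¹.toBlocks₁₁ = P⁻¹ + P⁻¹ * B * (D - C * P⁻¹ * B)⁻¹ * C * P⁻¹ := by
  have := hP.invertible
  have := hM.invertible
  have := invertibleOfFromBlocks₁₁Invertible P B C D
  simp only [← invOf_eq_nonsing_inv, invOf_fromBlocks₁₁_eq, toBlocks_fromBlocks₁₁]

theorem fromCols_zero_mul_mul_fromRows_zero_mul [Fintype k] [Fintype m] [Fintype n] [Fintype o]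
    [Fintype p] [Semiring α] (B : Matrix l m α) (G : Matrix (m ⊕ n) (o ⊕ p) α) (C : Matrix o k α)
    (Y : Matrix k l α) :
    fromCols B (0 : Matrix l n α) * (G * (fromRows C (0 : Matrix p k α) * Y)) =
      B * (G.toBlocks₁₁ * (C * Y)) := by
  rw [← fromBlocks_toBlocks G, ← Matrix.mul_assoc, ← Matrix.mul_assoc, fromCols_mul_fromBlocks,
    fromCols_mul_fromRows]
  simp [Matrix.mul_assoc]

theorem sub_fromRows_zero_mul_mul_fromCols_zero [Fintype k] [Fintype l] [Ring α]
    (D₁₁ : Matrix m n α) (D₁₂ : Matrix m p α) (D₂₁ : Matrix o n α) (D₂₂ : Matrix o p α)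
    (C : Matrix m k α) (X : Matrix k l α) (B : Matrix l n α) :
    fromBlocks D₁₁ D₁₂ D₂₁ D₂₂ -
        fromRows C (0 : Matrix o k α) * X * fromCols B (0 : Matrix l p α) =
      fromBlocks (D₁₁ - C * X * B) D₁₂ D₂₁ D₂₂ := by
  rw [fromRows_mul, fromRows_mul_fromCols]
  ext (_ | _) (_ | _) <;> simp

end Matrix

theorem stmt_1_general (np nq nr : ℕ)
    (App : Matrix (Fin np) (Fin np) ℝ)
    (Aqp : Matrix (Fin nq) (Fin np) ℝ)
    (Aqq : Matrix (Fin nq) (Fin nq) ℝ)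
    (Arq : Matrix (Fin nr) (Fin nq) ℝ)
    (Arr : Matrix (Fin nr) (Fin nr) ℝ)
    (A : Matrix (Fin np ⊕ (Fin nq ⊕ Fin nr)) (Fin np ⊕ (Fin nq ⊕ Fin nr)) ℝ)
    (hA : A = fromBlocks App (fromCols Aqpᵀ (0 : Matrix (Fin np) (Fin nr) ℝ))
        (fromRows Aqp (0 : Matrix (Fin nr) (Fin np) ℝ))
        (fromBlocks Aqq Arqᵀ Arq Arr))
    (hAunit : IsUnit A) (hAppunit : IsUnit App)
    (A₁ : Matrix (Fin nq ⊕ Fin nr) (Fin nq ⊕ Fin nr) ℝ)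
    (hA₁ : A₁ = fromBlocks (Aqq - Aqp * App⁻¹ * Aqpᵀ) Arqᵀ Arq Arr)
    (G₁ : Matrix (Fin nq ⊕ Fin nr) (Fin nq ⊕ Fin nr) ℝ)
    (hG₁ : G₁ = A₁⁻¹) :
    (A⁻¹).toBlocks₁₁ =
      App⁻¹ + (App⁻¹ * Aqpᵀ) * G₁.toBlocks₁₁ * (Aqp * App⁻¹) := by
  subst hA hA₁ hG₁
  rw [inv_fromBlocks_toBlocks₁₁_of_isUnit _ _ _ _ hAppunit hAunit,
    sub_fromRows_zero_mul_mul_fromCols_zero]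
  simp only [Matrix.mul_assoc]
  rw [fromCols_zero_mul_mul_fromRows_zero_mul]

/-- For a symmetric invertible block matrix
`A = [[App, Aqpᵀ, 0], [Aqp, Aqq, Arqᵀ], [0, Arq, Arr]]` with `App` invertible,
letting `A₁` be the Schur complement of `App` and `G₁ = A₁⁻¹`, the block `G_pp` of `G = A⁻¹`
is given by `G_pp = App⁻¹ + (App⁻¹Aqpᵀ) (G₁)_qq (Aqp App⁻¹)`. -/
theorem stmt_1 (np nq nr : ℕ)
    (App : Matrix (Fin np) (Fin np) ℝ)
    (Aqp : Matrix (Fin nq) (Fin np) ℝ)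
    (Aqq : Matrix (Fin nq) (Fin nq) ℝ)
    (Arq : Matrix (Fin nr) (Fin nq) ℝ)
    (Arr : Matrix (Fin nr) (Fin nr) ℝ)
    (A : Matrix (Fin np ⊕ (Fin nq ⊕ Fin nr)) (Fin np ⊕ (Fin nq ⊕ Fin nr)) ℝ)
    (hA : A = fromBlocks App (fromCols Aqpᵀ (0 : Matrix (Fin np) (Fin nr) ℝ))
        (fromRows Aqp (0 : Matrix (Fin nr) (Fin np) ℝ))
        (fromBlocks Aqq Arqᵀ Arq Arr))
    (hsymm : A.IsSymm) (hAunit : IsUnit A) (hAppunit : IsUnit App)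
    (A₁ : Matrix (Fin nq ⊕ Fin nr) (Fin nq ⊕ Fin nr) ℝ)
    (hA₁ : A₁ = fromBlocks (Aqq - Aqp * App⁻¹ * Aqpᵀ) Arqᵀ Arq Arr)
    (G₁ : Matrix (Fin nq ⊕ Fin nr) (Fin nq ⊕ Fin nr) ℝ)
    (hG₁ : G₁ = A₁⁻¹) :
    (A⁻¹).toBlocks₁₁ =
      App⁻¹ + (App⁻¹ * Aqpᵀ) * G₁.toBlocks₁₁ * (Aqp * App⁻¹) :=
  stmt_1_general np nq nr App Aqp Aqq Arq Arr A hA hAunit hAppunit A₁ hA₁ G₁ hG₁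
end

section
/- Let A be a real symmetric invertible matrix in 3×3 block form A = [[A_p̌p̌, A_p̂p̌ᵀ, A_qp̌ᵀ], [A_p̂p̌, A_p̂p̂, A_qp̂ᵀ], [A_qp̌, A_qp̂, A_qq]], suppose there is a real |p̂|×|p̌| matrix T_p with A_qp̌ = A_qp̂ T_p, let Q_p = [[I, 0, 0], [−T_p, I, 0], [0, 0, I]], and set Ā = Q_pᵀ A Q_p. Let G = A⁻¹ and Ḡ = Ā⁻¹. Then the (p̌, p̌) diagonal blocks of G and Ḡ coincide: G_p̌p̌ = Ḡ_p̌p̌. -/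
open Matrix

/-!
`Ā⁻¹ = Q_p⁻¹ G Q_p⁻ᵀ` (also for singular `A`, where both inverses are `0`), and `Q_p⁻¹` is
again block lower triangular with identity diagonal blocks. Conjugating by a matrix whose first
block row is `[L, 0]` replaces the leading block of `G` by `L G₁₁ Lᵀ`; applied first to the split
`(p̌ ⊕ p̂) ⊕ q` and then to `p̌ ⊕ p̂`, with `L = I` in the end, this leaves `G_p̌p̌` unchanged.
-/

theorem Matrix.toBlocks₁₁_fromBlocks_zero₁₂_mul_mul_fromBlocks_zero₂₁
    {R : Type*} [CommRing R] {m n m' n' : Type*} [Fintype m] [Fintype n]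
    (L : Matrix m' m R) (X : Matrix n' m R) (Y : Matrix n' n R) (G : Matrix (m ⊕ n) (m ⊕ n) R)
    (L' : Matrix m m' R) (X' : Matrix m n' R) (Y' : Matrix n n' R) :
    (fromBlocks L 0 X Y * G * fromBlocks L' X' 0 Y').toBlocks₁₁ = L * G.toBlocks₁₁ * L' := by
  conv_lhs => rw [← fromBlocks_toBlocks G]
  simp [fromBlocks_multiply]

theorem stmt_5_general (a b c : ℕ)
    (A : Matrix ((Fin a ⊕ Fin b) ⊕ Fin c) ((Fin a ⊕ Fin b) ⊕ Fin c) ℝ)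
    (Tp : Matrix (Fin b) (Fin a) ℝ)
    (Qp : Matrix ((Fin a ⊕ Fin b) ⊕ Fin c) ((Fin a ⊕ Fin b) ⊕ Fin c) ℝ)
    (hQp : Qp = fromBlocks
        (fromBlocks (1 : Matrix (Fin a) (Fin a) ℝ) 0 (-Tp) (1 : Matrix (Fin b) (Fin b) ℝ))
        0 0 (1 : Matrix (Fin c) (Fin c) ℝ))
    (Abar : Matrix ((Fin a ⊕ Fin b) ⊕ Fin c) ((Fin a ⊕ Fin b) ⊕ Fin c) ℝ)
    (hAbar : Abar = Qpᵀ * A * Qp) :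
    ((A⁻¹).toBlocks₁₁).toBlocks₁₁ = ((Abar⁻¹).toBlocks₁₁).toBlocks₁₁ := by
  have hinv : Abar⁻¹ = Qp⁻¹ * A⁻¹ * Qp⁻¹ᵀ := by
    rw [hAbar, Matrix.mul_inv_rev, Matrix.mul_inv_rev, transpose_nonsing_inv, Matrix.mul_assoc]
  have hQpinv : Qp⁻¹ = fromBlocks (fromBlocks 1 0 Tp 1) 0 0 1 := by
    rw [hQp, inv_fromBlocks_zero₁₂_of_isUnit_iff _ _ _ (by simp),
      inv_fromBlocks_zero₁₂_of_isUnit_iff _ _ _ (by simp)]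
    simp
  simp only [hinv, hQpinv, fromBlocks_transpose, transpose_zero, transpose_one,
    toBlocks₁₁_fromBlocks_zero₁₂_mul_mul_fromBlocks_zero₂₁, Matrix.one_mul, Matrix.mul_one]

/-- For a symmetric invertible matrix `A` in 3×3 block form with `A_qp̌ = A_qp̂ T_p`,
setting `Ā = Q_pᵀ A Q_p` with `Q_p = [[I,0,0],[-T_p,I,0],[0,0,I]]`, the leading
`(p̌, p̌)` diagonal blocks of `G = A⁻¹` and `Ḡ = Ā⁻¹` coincide. -/
theorem stmt_5 (a b c : ℕ)
    (A11 : Matrix (Fin a) (Fin a) ℝ)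
    (A21 : Matrix (Fin b) (Fin a) ℝ)
    (A22 : Matrix (Fin b) (Fin b) ℝ)
    (A31 : Matrix (Fin c) (Fin a) ℝ)
    (A32 : Matrix (Fin c) (Fin b) ℝ)
    (A33 : Matrix (Fin c) (Fin c) ℝ)
    (A : Matrix ((Fin a ⊕ Fin b) ⊕ Fin c) ((Fin a ⊕ Fin b) ⊕ Fin c) ℝ)
    (hA : A = fromBlocks (fromBlocks A11 A21ᵀ A21 A22) (fromRows A31ᵀ A32ᵀ)
        (fromCols A31 A32) A33)
    (hsymm : A.IsSymm) (hAunit : IsUnit A)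
    (Tp : Matrix (Fin b) (Fin a) ℝ)
    (hTp : A31 = A32 * Tp)
    (Qp : Matrix ((Fin a ⊕ Fin b) ⊕ Fin c) ((Fin a ⊕ Fin b) ⊕ Fin c) ℝ)
    (hQp : Qp = fromBlocks
        (fromBlocks (1 : Matrix (Fin a) (Fin a) ℝ) 0 (-Tp) (1 : Matrix (Fin b) (Fin b) ℝ))
        0 0 (1 : Matrix (Fin c) (Fin c) ℝ))
    (Abar : Matrix ((Fin a ⊕ Fin b) ⊕ Fin c) ((Fin a ⊕ Fin b) ⊕ Fin c) ℝ)
    (hAbar : Abar = Qpᵀ * A * Qp) :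
    ((A⁻¹).toBlocks₁₁).toBlocks₁₁ = ((Abar⁻¹).toBlocks₁₁).toBlocks₁₁ :=
  stmt_5_general a b c A Tp Qp hQp Abar hAbar
end

section
/- Let A be a real symmetric invertible matrix in 3×3 block form A = [[A_p̌p̌, A_p̂p̌ᵀ, A_qp̌ᵀ], [A_p̂p̌, A_p̂p̂, A_qp̂ᵀ], [A_qp̌, A_qp̂, A_qq]], suppose there is a real |p̂|×|p̌| matrix T_p with A_qp̌ = A_qp̂ T_p, and set B_p̌p̌ = A_p̌p̌ − T_pᵀ A_p̂p̌ − A_p̂p̌ᵀ T_p + T_pᵀ A_p̂p̂ T_p and B_p̂p̌ = A_p̂p̌ − A_p̂p̂ T_p. Assume B_p̌p̌ is invertible, let Ā₁ = [[A_p̂p̂ − B_p̂p̌ B_p̌p̌⁻¹ B_p̂p̌ᵀ, A_qp̂ᵀ], [A_qp̂, A_qq]], assume Ā₁ is invertible, and let Ḡ₁ = Ā₁⁻¹ and G = A⁻¹. Then G_p̌p̌ = B_p̌p̌⁻¹ + [−B_p̌p̌⁻¹B_p̂p̌ᵀ, 0] · Ḡ₁ · [−B_p̌p̌⁻¹B_p̂p̌ᵀ,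 0]ᵀ, where [−B_p̌p̌⁻¹B_p̂p̌ᵀ, 0] is the |p̌|×(|p̂|+|q|) block row whose p̂-block is −B_p̌p̌⁻¹B_p̂p̌ᵀ and whose q-block is zero. -/
open Matrix

/-! Regroup the blocks as `p̌ | (p̂, q)`. Eliminating with the block-unitriangular matrix
`[[1, -[T_pᵀ, 0]], [0, 1]]` (and its transpose on the right) does not change the `p̌p̌` block of
the inverse, and turns `A` into `[[B_p̌p̌, [B_p̂p̌ᵀ, 0]], [[B_p̂p̌; 0], A₍p̂q₎₍p̂q₎]]`:
the hypothesis `A_qp̌ = A_qp̂ T_p` is exactly what makes the `q`-part of the off-diagonal block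
vanish. The Schur complement of `B_p̌p̌` in this matrix is `Ā₁`, so the block-inverse formula gives
`G_p̌p̌ = B_p̌p̌⁻¹ + B_p̌p̌⁻¹ [B_p̂p̌ᵀ, 0] Ḡ₁ [B_p̂p̌ᵀ, 0]ᵀ B_p̌p̌⁻¹`, which is the claim because
`B_p̌p̌` is symmetric. -/

section BlockInverse

variable {m n R : Type*} [Fintype m] [Fintype n] [DecidableEq m] [DecidableEq n] [CommRing R]

theorem toBlocks₁₁_inv_fromBlocks_of_isUnit (A : Matrix m m R) (B : Matrix m n R)
    (C : Matrix n m R) (D : Matrix n n R) (hA : IsUnit A) (hS : IsUnit (D - C * A⁻¹ * B)) :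
    ((fromBlocks A B C D)⁻¹).toBlocks₁₁ = A⁻¹ + A⁻¹ * B * (D - C * A⁻¹ * B)⁻¹ * C * A⁻¹ := by
  let := hA.invertible
  let _ : Invertible (D - C * ⅟A * B) := by rw [invOf_eq_nonsing_inv]; exact hS.invertible
  let := fromBlocks₁₁Invertible A B C D
  rw [← invOf_eq_nonsing_inv, invOf_fromBlocks₁₁_eq, toBlocks_fromBlocks₁₁]
  simp only [invOf_eq_nonsing_inv]

theorem inv_fromBlocks_one_zero₂₁_one (U : Matrix m n R) :
    (fromBlocks 1 U 0 1 : Matrix (m ⊕ n) (m ⊕ n) R)⁻¹ = fromBlocks 1 (-U) 0 1 :=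
  inv_eq_left_inv <| by simp [fromBlocks_multiply]

theorem inv_fromBlocks_one_zero₁₂_one (L : Matrix n m R) :
    (fromBlocks 1 0 L 1 : Matrix (m ⊕ n) (m ⊕ n) R)⁻¹ = fromBlocks 1 0 (-L) 1 :=
  inv_eq_left_inv <| by simp [fromBlocks_multiply]

theorem toBlocks₁₁_inv_unitriangular_mul_mul (U : Matrix m n R) (L : Matrix n m R)
    (X : Matrix (m ⊕ n) (m ⊕ n) R) :
    ((fromBlocks 1 U 0 1 * X * fromBlocks 1 0 L 1)⁻¹).toBlocks₁₁ = (X⁻¹).toBlocks₁₁ := by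
  rw [Matrix.mul_inv_rev, Matrix.mul_inv_rev, inv_fromBlocks_one_zero₂₁_one,
    inv_fromBlocks_one_zero₁₂_one, ← fromBlocks_toBlocks X⁻¹]
  simp [fromBlocks_multiply]

theorem fromBlocks_eliminate (A : Matrix m m R) (B : Matrix m n R) (C : Matrix n m R)
    (D : Matrix n n R) (U : Matrix m n R) (V : Matrix n m R) :
    fromBlocks 1 (-U) 0 1 * fromBlocks A B C D * fromBlocks 1 0 (-V) 1 =
      fromBlocks (A - U * C - B * V + U * D * V) (B - U * D) (C - D * V) D := by
  simp only [fromBlocks_multiply, Matrix.one_mul, Matrix.mul_one, Matrix.zero_mul,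
    Matrix.mul_zero, zero_add, Matrix.neg_mul, Matrix.mul_neg, Matrix.add_mul, Matrix.mul_assoc]
  congr 1 <;> abel

theorem toBlocks₁₁_inv_fromBlocks_eliminate (A : Matrix m m R) (B : Matrix m n R)
    (C : Matrix n m R) (D : Matrix n n R) (U : Matrix m n R) (V : Matrix n m R) :
    ((fromBlocks A B C D)⁻¹).toBlocks₁₁ =
      ((fromBlocks (A - U * C - B * V + U * D * V) (B - U * D) (C - D * V) D)⁻¹).toBlocks₁₁ := by
  rw [← fromBlocks_eliminate, toBlocks₁₁_inv_unitriangular_mul_mul]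

end BlockInverse

section SumAssoc

variable {l m n l' m' n' R : Type*}

theorem reindex_sumAssoc_fromBlocks_fromBlocks (A₁₁ : Matrix l l' R) (A₁₂ : Matrix l m' R)
    (A₂₁ : Matrix m l' R) (A₂₂ : Matrix m m' R) (B₁ : Matrix l n' R) (B₂ : Matrix m n' R)
    (C₁ : Matrix n l' R) (C₂ : Matrix n m' R) (D : Matrix n n' R) :
    reindex (Equiv.sumAssoc l m n) (Equiv.sumAssoc l' m' n')
        (fromBlocks (fromBlocks A₁₁ A₁₂ A₂₁ A₂₂) (fromRows B₁ B₂) (fromCols C₁ C₂) D) =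
      fromBlocks A₁₁ (fromCols A₁₂ B₁) (fromRows A₂₁ C₁) (fromBlocks A₂₂ B₂ C₂ D) := by
  ext (i | i | i) (j | j | j) <;> rfl

theorem toBlocks₁₁_reindex_sumAssoc (X : Matrix ((l ⊕ m) ⊕ n) ((l' ⊕ m') ⊕ n') R) :
    (reindex (Equiv.sumAssoc l m n) (Equiv.sumAssoc l' m' n') X).toBlocks₁₁ =
      X.toBlocks₁₁.toBlocks₁₁ :=
  rfl

end SumAssoc

theorem toBlocks₁₁_inv_fromBlocks_skeleton {p q r R : Type*} [Fintype p] [Fintype q]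
    [Fintype r] [DecidableEq p] [DecidableEq q] [DecidableEq r] [CommRing R]
    (A₁₁ : Matrix p p R) (A₂₁ : Matrix q p R) (A₂₂ : Matrix q q R) (A₃₂ : Matrix r q R)
    (A₃₃ : Matrix r r R) (T : Matrix q p R) (hA₂₂ : A₂₂ᵀ = A₂₂) :
    ((fromBlocks A₁₁ (fromCols A₂₁ᵀ (A₃₂ * T)ᵀ) (fromRows A₂₁ (A₃₂ * T))
        (fromBlocks A₂₂ A₃₂ᵀ A₃₂ A₃₃))⁻¹).toBlocks₁₁ =
      ((fromBlocks (A₁₁ - Tᵀ * A₂₁ - A₂₁ᵀ * T + Tᵀ * A₂₂ * T)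
        (fromCols (A₂₁ - A₂₂ * T)ᵀ 0) (fromRows (A₂₁ - A₂₂ * T) 0)
        (fromBlocks A₂₂ A₃₂ᵀ A₃₂ A₃₃))⁻¹).toBlocks₁₁ := by
  rw [toBlocks₁₁_inv_fromBlocks_eliminate _ _ _ _ (fromCols Tᵀ 0) (fromRows T 0)]
  congr 3
  · simp only [fromCols_mul_fromRows, fromBlocks_mul_fromRows, Matrix.zero_mul, Matrix.mul_zero,
      add_zero, transpose_mul, Matrix.mul_assoc]
  · ext i (j | j) <;> simp [fromCols_mul_fromBlocks, hA₂₂]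
  · ext (i | i) j <;> simp [fromBlocks_mul_fromRows]

theorem stmt_6_general (a b c : ℕ)
    (A11 : Matrix (Fin a) (Fin a) ℝ)
    (A21 : Matrix (Fin b) (Fin a) ℝ)
    (A22 : Matrix (Fin b) (Fin b) ℝ)
    (A31 : Matrix (Fin c) (Fin a) ℝ)
    (A32 : Matrix (Fin c) (Fin b) ℝ)
    (A33 : Matrix (Fin c) (Fin c) ℝ)
    (A : Matrix ((Fin a ⊕ Fin b) ⊕ Fin c) ((Fin a ⊕ Fin b) ⊕ Fin c) ℝ)
    (hA : A = fromBlocks (fromBlocks A11 A21ᵀ A21 A22) (fromRows A31ᵀ A32ᵀ)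
        (fromCols A31 A32) A33)
    (hsymm : A.IsSymm)
    (Tp : Matrix (Fin b) (Fin a) ℝ)
    (hTp : A31 = A32 * Tp)
    (B11 : Matrix (Fin a) (Fin a) ℝ)
    (hB11 : B11 = A11 - Tpᵀ * A21 - A21ᵀ * Tp + Tpᵀ * A22 * Tp)
    (B21 : Matrix (Fin b) (Fin a) ℝ)
    (hB21 : B21 = A21 - A22 * Tp)
    (hB11unit : IsUnit B11)
    (Abar₁ : Matrix (Fin b ⊕ Fin c) (Fin b ⊕ Fin c) ℝ)
    (hAbar₁ : Abar₁ = fromBlocks (A22 - B21 * B11⁻¹ * B21ᵀ) A32ᵀ A32 A33)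
    (hAbar₁unit : IsUnit Abar₁)
    (Gbar₁ : Matrix (Fin b ⊕ Fin c) (Fin b ⊕ Fin c) ℝ)
    (hGbar₁ : Gbar₁ = Abar₁⁻¹) :
    ((A⁻¹).toBlocks₁₁).toBlocks₁₁ =
      B11⁻¹ +
        (fromCols (-(B11⁻¹ * B21ᵀ)) (0 : Matrix (Fin a) (Fin c) ℝ)) * Gbar₁ *
          (fromCols (-(B11⁻¹ * B21ᵀ)) (0 : Matrix (Fin a) (Fin c) ℝ))ᵀ := by
  have hblocks := hsymm.eq
  rw [hA, fromBlocks_transpose, fromBlocks_transpose, fromBlocks_inj, fromBlocks_inj] at hblocks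
  obtain ⟨⟨hA11, -, -, hA22⟩, -⟩ := hblocks
  have hB11symm : B11ᵀ = B11 := by
    rw [hB11]
    simp only [transpose_add, transpose_sub, transpose_mul, transpose_transpose, hA11, hA22,
      Matrix.mul_assoc]
    abel
  have hschur :
      fromBlocks A22 A32ᵀ A32 A33 - fromRows B21 0 * B11⁻¹ * fromCols B21ᵀ 0 = Abar₁ := by
    rw [hAbar₁, fromRows_mul, fromRows_mul_fromCols]
    ext (i | i) (j | j) <;> simp
  rw [← toBlocks₁₁_reindex_sumAssoc, ← inv_reindex, hA, reindex_sumAssoc_fromBlocks_fromBlocks,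
    hTp, toBlocks₁₁_inv_fromBlocks_skeleton _ _ _ _ _ _ hA22, ← hB11, ← hB21,
    toBlocks₁₁_inv_fromBlocks_of_isUnit _ _ _ _ hB11unit (hschur ▸ hAbar₁unit), hschur, ← hGbar₁]
  have hW : fromCols (-(B11⁻¹ * B21ᵀ)) (0 : Matrix (Fin a) (Fin c) ℝ) =
      -(B11⁻¹ * fromCols B21ᵀ 0) := by
    rw [mul_fromCols, fromCols_neg, Matrix.mul_zero, neg_zero]
  rw [hW, transpose_neg, transpose_mul, transpose_fromCols, transpose_zero, transpose_transpose,
    transpose_nonsing_inv, hB11symm]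
  simp only [Matrix.neg_mul, Matrix.mul_neg, neg_neg, Matrix.mul_assoc]

/-- Block inversion with skeletonization: for a symmetric invertible `A` in 3×3 block
form with `A_qp̌ = A_qp̂ T_p`, if `B_p̌p̌` and the skeletonized Schur complement `Ā₁`
are invertible, then with `Ḡ₁ = Ā₁⁻¹`,
`G_p̌p̌ = B_p̌p̌⁻¹ + [-B_p̌p̌⁻¹B_p̂p̌ᵀ, 0] Ḡ₁ [-B_p̌p̌⁻¹B_p̂p̌ᵀ, 0]ᵀ`. -/
theorem stmt_6 (a b c : ℕ)
    (A11 : Matrix (Fin a) (Fin a) ℝ)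
    (A21 : Matrix (Fin b) (Fin a) ℝ)
    (A22 : Matrix (Fin b) (Fin b) ℝ)
    (A31 : Matrix (Fin c) (Fin a) ℝ)
    (A32 : Matrix (Fin c) (Fin b) ℝ)
    (A33 : Matrix (Fin c) (Fin c) ℝ)
    (A : Matrix ((Fin a ⊕ Fin b) ⊕ Fin c) ((Fin a ⊕ Fin b) ⊕ Fin c) ℝ)
    (hA : A = fromBlocks (fromBlocks A11 A21ᵀ A21 A22) (fromRows A31ᵀ A32ᵀ)
        (fromCols A31 A32) A33)
    (hsymm : A.IsSymm) (hAunit : IsUnit A)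
    (Tp : Matrix (Fin b) (Fin a) ℝ)
    (hTp : A31 = A32 * Tp)
    (B11 : Matrix (Fin a) (Fin a) ℝ)
    (hB11 : B11 = A11 - Tpᵀ * A21 - A21ᵀ * Tp + Tpᵀ * A22 * Tp)
    (B21 : Matrix (Fin b) (Fin a) ℝ)
    (hB21 : B21 = A21 - A22 * Tp)
    (hB11unit : IsUnit B11)
    (Abar₁ : Matrix (Fin b ⊕ Fin c) (Fin b ⊕ Fin c) ℝ)
    (hAbar₁ : Abar₁ = fromBlocks (A22 - B21 * B11⁻¹ * B21ᵀ) A32ᵀ A32 A33)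
    (hAbar₁unit : IsUnit Abar₁)
    (Gbar₁ : Matrix (Fin b ⊕ Fin c) (Fin b ⊕ Fin c) ℝ)
    (hGbar₁ : Gbar₁ = Abar₁⁻¹) :
    ((A⁻¹).toBlocks₁₁).toBlocks₁₁ =
      B11⁻¹ +
        (fromCols (-(B11⁻¹ * B21ᵀ)) (0 : Matrix (Fin a) (Fin c) ℝ)) * Gbar₁ *
          (fromCols (-(B11⁻¹ * B21ᵀ)) (0 : Matrix (Fin a) (Fin c) ℝ))ᵀ :=
  stmt_6_general a b c A11 A21 A22 A31 A32 A33 A hA hsymm Tp hTp B11 hB11 B21 hB21 hB11unit Abar₁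
    hAbar₁ hAbar₁unit Gbar₁ hGbar₁
end

section
/- Let A be a real symmetric invertible matrix in 3×3 block form A = [[A_p̌p̌, A_p̂p̌ᵀ, A_qp̌ᵀ], [A_p̂p̌, A_p̂p̂, A_qp̂ᵀ], [A_qp̌, A_qp̂, A_qq]], suppose there is a real |p̂|×|p̌| matrix T_p with A_qp̌ = A_qp̂ T_p, and set B_p̌p̌ = A_p̌p̌ − T_pᵀ A_p̂p̌ − A_p̂p̌ᵀ T_p + T_pᵀ A_p̂p̂ T_p and B_p̂p̌ = A_p̂p̌ − A_p̂p̂ T_p. Assume B_p̌p̌ is invertible, let Ā₁ = [[A_p̂p̂ − B_p̂p̌ B_p̌p̌⁻¹ B_p̂p̌ᵀ, A_qp̂ᵀ], [A_qp̂, A_qq]], assume Ā₁ is invertible, let Ḡ₁ = Ā₁⁻¹, and let G₁ denote the submatrix of G = A⁻¹ with rows and columns indexed by p̂ ∪ q. Then G₁ = [[T_p B_p̌p̌⁻¹ T_pᵀ, 0], [0, 0]] + [[T_p B_p̌p̌⁻¹ B_p̂p̌ᵀ + I, 0], [0, I]] · Ḡ₁ · [[B_p̂p̌ B_p̌p̌⁻¹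 T_pᵀ + I, 0], [0, I]], where all 2×2 block matrices have diagonal blocks of sizes |p̂| and |q|. -/
open Matrix

/-!
Reorder the indices as `p̌ ⊕ (p̂ ⊕ q)` and put `U = [T_p; 0]`. Block elimination factors the
reordered `A` as `[[1, Uᵀ], [0, 1]] * K * [[1, 0], [U, 1]]`; since `A_qp̌ = A_qp̂ T_p` and `A` is
symmetric, `K = [[B_p̌p̌, [B_p̂p̌ᵀ, 0]], [[B_p̂p̌; 0], A(p̂∪q, p̂∪q)]]`, and the Schur complement of
`B_p̌p̌` in `K` is `Ā₁`. Inverting the three factors, `G₁` is the lower right block of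
`[[1, 0], [-U, 1]] * K⁻¹ * [[1, -Uᵀ], [0, 1]]`, which the Schur complement formula for `K⁻¹`
evaluates to the claimed expression.
-/

namespace Matrix

section Elimination

variable {l m α : Type*} [Fintype l] [Fintype m] [DecidableEq l] [DecidableEq m]

theorem fromBlocks_eq_mul_mul_of_elimination [Ring α] (M₁₁ : Matrix l l α) (M₁₂ : Matrix l m α)
    (M₂₁ : Matrix m l α) (M₂₂ : Matrix m m α) (U : Matrix m l α) (W : Matrix l m α) :
    fromBlocks M₁₁ M₁₂ M₂₁ M₂₂ = fromBlocks 1 W 0 1 *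
      fromBlocks (M₁₁ - W * M₂₁ - M₁₂ * U + W * M₂₂ * U) (M₁₂ - W * M₂₂) (M₂₁ - M₂₂ * U) M₂₂ *
        fromBlocks 1 0 U 1 := by
  simp only [fromBlocks_multiply, Matrix.one_mul, Matrix.zero_mul, Matrix.mul_one, Matrix.mul_zero,
    zero_add, Matrix.mul_sub, Matrix.mul_assoc]
  congr 1 <;> abel_nf

theorem inv_fromBlocks_of_isUnit₁₁ [CommRing α] (B : Matrix l l α) (C : Matrix l m α)
    (D : Matrix m l α) (E : Matrix m m α) (hB : IsUnit B) (hS : IsUnit (E - D * B⁻¹ * C)) :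
    (fromBlocks B C D E)⁻¹ = fromBlocks (B⁻¹ + B⁻¹ * C * (E - D * B⁻¹ * C)⁻¹ * D * B⁻¹)
      (-(B⁻¹ * C * (E - D * B⁻¹ * C)⁻¹)) (-((E - D * B⁻¹ * C)⁻¹ * D * B⁻¹))
      (E - D * B⁻¹ * C)⁻¹ := by
  let := hB.invertible
  let : Invertible (E - D * ⅟B * C) := by rw [invOf_eq_nonsing_inv]; exact hS.invertible
  let := fromBlocks₁₁Invertible B C D E
  rw [← invOf_eq_nonsing_inv, invOf_fromBlocks₁₁_eq]
  simp only [invOf_eq_nonsing_inv]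

theorem toBlocks₂₂_inv_mul_mul [CommRing α] (B : Matrix l l α) (C : Matrix l m α)
    (D : Matrix m l α) (E : Matrix m m α) (U : Matrix m l α) (W : Matrix l m α)
    (hB : IsUnit B) (hS : IsUnit (E - D * B⁻¹ * C)) :
    (fromBlocks 1 W 0 1 * fromBlocks B C D E * fromBlocks 1 0 U 1)⁻¹.toBlocks₂₂ =
      U * B⁻¹ * W + (U * B⁻¹ * C + 1) * (E - D * B⁻¹ * C)⁻¹ * (D * B⁻¹ * W + 1) := by
  rw [Matrix.mul_inv_rev, Matrix.mul_inv_rev,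
    inv_fromBlocks_zero₁₂_of_isUnit_iff _ _ _ (iff_of_true isUnit_one isUnit_one),
    inv_fromBlocks_zero₂₁_of_isUnit_iff _ _ _ (iff_of_true isUnit_one isUnit_one),
    inv_fromBlocks_of_isUnit₁₁ B C D E hB hS]
  simp only [inv_one, fromBlocks_multiply, toBlocks_fromBlocks₂₂, Matrix.one_mul, Matrix.mul_one,
    Matrix.zero_mul, Matrix.mul_zero, Matrix.neg_mul, Matrix.mul_neg, neg_neg, Matrix.mul_add,
    Matrix.add_mul, Matrix.mul_assoc, add_zero]
  abel

end Elimination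

theorem fromBlocks_fromBlocks_submatrix_sumAssoc_symm {a b c d e f α : Type*}
    (P : Matrix a d α) (Q : Matrix a e α) (R : Matrix b d α) (S : Matrix b e α)
    (X : Matrix a f α) (Y : Matrix b f α) (Z : Matrix c d α) (V : Matrix c e α) (W : Matrix c f α) :
    (fromBlocks (fromBlocks P Q R S) (fromRows X Y) (fromCols Z V) W).submatrix
        (Equiv.sumAssoc a b c).symm (Equiv.sumAssoc d e f).symm =
      fromBlocks P (fromCols Q X) (fromRows R Z) (fromBlocks S Y V W) := by
  ext (i | i | i) (j | j | j) <;> rfl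

theorem fromRows_zero_mul_mul_fromCols_zero {l m n o p q α : Type*} [Fintype n] [Fintype o]
    [Semiring α] (X : Matrix l n α) (Y : Matrix n o α) (Z : Matrix o p α) :
    fromRows X (0 : Matrix m n α) * Y * fromCols Z (0 : Matrix o q α) =
      fromBlocks (X * Y * Z) 0 0 0 := by
  rw [fromRows_mul, fromRows_mul_fromCols]
  simp

end Matrix

theorem stmt_7_general (a b c : ℕ)
    (A11 : Matrix (Fin a) (Fin a) ℝ)
    (A21 : Matrix (Fin b) (Fin a) ℝ)
    (A22 : Matrix (Fin b) (Fin b) ℝ)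
    (A31 : Matrix (Fin c) (Fin a) ℝ)
    (A32 : Matrix (Fin c) (Fin b) ℝ)
    (A33 : Matrix (Fin c) (Fin c) ℝ)
    (A : Matrix ((Fin a ⊕ Fin b) ⊕ Fin c) ((Fin a ⊕ Fin b) ⊕ Fin c) ℝ)
    (hA : A = fromBlocks (fromBlocks A11 A21ᵀ A21 A22) (fromRows A31ᵀ A32ᵀ)
        (fromCols A31 A32) A33)
    (hsymm : A.IsSymm)
    (Tp : Matrix (Fin b) (Fin a) ℝ)
    (hTp : A31 = A32 * Tp)
    (B11 : Matrix (Fin a) (Fin a) ℝ)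
    (hB11 : B11 = A11 - Tpᵀ * A21 - A21ᵀ * Tp + Tpᵀ * A22 * Tp)
    (B21 : Matrix (Fin b) (Fin a) ℝ)
    (hB21 : B21 = A21 - A22 * Tp)
    (hB11unit : IsUnit B11)
    (Abar₁ : Matrix (Fin b ⊕ Fin c) (Fin b ⊕ Fin c) ℝ)
    (hAbar₁ : Abar₁ = fromBlocks (A22 - B21 * B11⁻¹ * B21ᵀ) A32ᵀ A32 A33)
    (hAbar₁unit : IsUnit Abar₁)
    (Gbar₁ : Matrix (Fin b ⊕ Fin c) (Fin b ⊕ Fin c) ℝ)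
    (hGbar₁ : Gbar₁ = Abar₁⁻¹)
    (G₁ : Matrix (Fin b ⊕ Fin c) (Fin b ⊕ Fin c) ℝ)
    (hG₁ : G₁ = (A⁻¹).submatrix (Sum.elim (Sum.inl ∘ Sum.inr) Sum.inr)
        (Sum.elim (Sum.inl ∘ Sum.inr) Sum.inr)) :
    G₁ = fromBlocks (Tp * B11⁻¹ * Tpᵀ) 0 0 (0 : Matrix (Fin c) (Fin c) ℝ) +
        fromBlocks (Tp * B11⁻¹ * B21ᵀ + 1) 0 0 (1 : Matrix (Fin c) (Fin c) ℝ) * Gbar₁ *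
          fromBlocks (B21 * B11⁻¹ * Tpᵀ + 1) 0 0 (1 : Matrix (Fin c) (Fin c) ℝ) := by
  have hA22 : A22ᵀ = A22 := by
    ext i j
    simpa [hA] using congr_fun₂ hsymm (Sum.inl (Sum.inr i)) (Sum.inl (Sum.inr j))
  set e := (Equiv.sumAssoc (Fin a) (Fin b) (Fin c)).symm
  set U := fromRows Tp (0 : Matrix (Fin c) (Fin a) ℝ)
  set W := fromCols Tpᵀ (0 : Matrix (Fin a) (Fin c) ℝ)
  set E := fromBlocks A22 A32ᵀ A32 A33
  have hfactor : A.submatrix e e = fromBlocks 1 W 0 1 *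
      fromBlocks B11 (fromCols B21ᵀ 0) (fromRows B21 0) E * fromBlocks 1 0 U 1 := by
    rw [hA, fromBlocks_fromBlocks_submatrix_sumAssoc_symm,
      fromBlocks_eq_mul_mul_of_elimination _ _ _ _ U W]
    congr 3
    · simp [U, W, hB11, fromCols_mul_fromBlocks, fromCols_mul_fromRows, hTp]
    · ext i (j | j) <;> simp [W, hB21, fromCols_mul_fromBlocks, hTp, hA22]
    · ext (i | i) j <;> simp [U, hB21, fromBlocks_mul_fromRows, hTp]
  have hS : E - fromRows B21 0 * B11⁻¹ * fromCols B21ᵀ 0 = Abar₁ := by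
    rw [fromRows_zero_mul_mul_fromCols_zero, hAbar₁]
    ext (i | i) (j | j) <;> simp [E]
  have hG : G₁ = (A.submatrix e e)⁻¹.toBlocks₂₂ := by
    rw [inv_submatrix_equiv, hG₁]
    rfl
  rw [hG, hfactor, toBlocks₂₂_inv_mul_mul _ _ _ _ _ _ hB11unit (hS ▸ hAbar₁unit), hS, ← hGbar₁]
  simp only [U, W, fromRows_zero_mul_mul_fromCols_zero, ← fromBlocks_one, fromBlocks_add]
  simp

/-- Block inversion with skeletonization: with the notation of Lemma 4, the submatrix
`G₁ = G(p̂∪q, p̂∪q)` of `G = A⁻¹` satisfies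
`G₁ = [[T_p B⁻¹ T_pᵀ, 0],[0,0]] + [[T_p B⁻¹ B_p̂p̌ᵀ + I, 0],[0, I]] Ḡ₁ [[B_p̂p̌ B⁻¹ T_pᵀ + I, 0],[0, I]]`. -/
theorem stmt_7 (a b c : ℕ)
    (A11 : Matrix (Fin a) (Fin a) ℝ)
    (A21 : Matrix (Fin b) (Fin a) ℝ)
    (A22 : Matrix (Fin b) (Fin b) ℝ)
    (A31 : Matrix (Fin c) (Fin a) ℝ)
    (A32 : Matrix (Fin c) (Fin b) ℝ)
    (A33 : Matrix (Fin c) (Fin c) ℝ)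
    (A : Matrix ((Fin a ⊕ Fin b) ⊕ Fin c) ((Fin a ⊕ Fin b) ⊕ Fin c) ℝ)
    (hA : A = fromBlocks (fromBlocks A11 A21ᵀ A21 A22) (fromRows A31ᵀ A32ᵀ)
        (fromCols A31 A32) A33)
    (hsymm : A.IsSymm) (hAunit : IsUnit A)
    (Tp : Matrix (Fin b) (Fin a) ℝ)
    (hTp : A31 = A32 * Tp)
    (B11 : Matrix (Fin a) (Fin a) ℝ)
    (hB11 : B11 = A11 - Tpᵀ * A21 - A21ᵀ * Tp + Tpᵀ * A22 * Tp)
    (B21 : Matrix (Fin b) (Fin a) ℝ)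
    (hB21 : B21 = A21 - A22 * Tp)
    (hB11unit : IsUnit B11)
    (Abar₁ : Matrix (Fin b ⊕ Fin c) (Fin b ⊕ Fin c) ℝ)
    (hAbar₁ : Abar₁ = fromBlocks (A22 - B21 * B11⁻¹ * B21ᵀ) A32ᵀ A32 A33)
    (hAbar₁unit : IsUnit Abar₁)
    (Gbar₁ : Matrix (Fin b ⊕ Fin c) (Fin b ⊕ Fin c) ℝ)
    (hGbar₁ : Gbar₁ = Abar₁⁻¹)
    (G₁ : Matrix (Fin b ⊕ Fin c) (Fin b ⊕ Fin c) ℝ)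
    (hG₁ : G₁ = (A⁻¹).submatrix (Sum.elim (Sum.inl ∘ Sum.inr) Sum.inr)
        (Sum.elim (Sum.inl ∘ Sum.inr) Sum.inr)) :
    G₁ = fromBlocks (Tp * B11⁻¹ * Tpᵀ) 0 0 (0 : Matrix (Fin c) (Fin c) ℝ) +
        fromBlocks (Tp * B11⁻¹ * B21ᵀ + 1) 0 0 (1 : Matrix (Fin c) (Fin c) ℝ) * Gbar₁ *
          fromBlocks (B21 * B11⁻¹ * Tpᵀ + 1) 0 0 (1 : Matrix (Fin c) (Fin c) ℝ) :=
  stmt_7_general a b c A11 A21 A22 A31 A32 A33 A hA hsymm Tp hTp B11 hB11 B21 hB21 hB11unit Abar₁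
    hAbar₁ hAbar₁unit Gbar₁ hGbar₁ G₁ hG₁
end

section
/- Let A be a real symmetric matrix in 3×3 block form A = [[A_p̌p̌, A_p̂p̌ᵀ, A_qp̌ᵀ], [A_p̂p̌, A_p̂p̂, A_qp̂ᵀ], [A_qp̌, A_qp̂, A_qq]], suppose there is a real |p̂|×|p̌| matrix T_p with A_qp̌ = A_qp̂ T_p, and set B_p̌p̌ = A_p̌p̌ − T_pᵀ A_p̂p̌ − A_p̂p̌ᵀ T_p + T_pᵀ A_p̂p̂ T_p and B_p̂p̌ = A_p̂p̌ − A_p̂p̂ T_p. If A is invertible, B_p̌p̌ is invertible, and Ā₁ = [[A_p̂p̂ − B_p̂p̌ B_p̌p̌⁻¹ B_p̂p̌ᵀ, A_qp̂ᵀ], [A_qp̂, A_qq]], then Ā₁ is invertible. -/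
/-!
Congruence by the unit lower-triangular matrix `Q_p` removes the `A_qp̌` block, since
`A_qp̌ = A_qp̂ T_p`, so `Q_pᵀ A Q_p` is block tridiagonal with leading block `B_p̌p̌`. Taking the
Schur complement of `B_p̌p̌` in it gives `det A = det B_p̌p̌ · det Ā₁`, hence `Ā₁` is invertible
whenever `A` is.
-/

open Matrix

namespace Matrix

variable {R : Type*} [CommRing R] {l m n : Type*}
  [Fintype l] [Fintype m] [Fintype n] [DecidableEq l] [DecidableEq m] [DecidableEq n]

theorem det_fromBlocks_fromBlocks_fromRows_zero (P : Matrix l l R) [Invertible P]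
    (U : Matrix l m R) (V : Matrix m l R) (D : Matrix m m R) (E : Matrix m n R)
    (F : Matrix n m R) (G : Matrix n n R) :
    (fromBlocks (fromBlocks P U V D) (fromRows 0 E) (fromCols 0 F) G).det =
      P.det * (fromBlocks (D - V * ⅟P * U) E F G).det := by
  have hassoc : fromBlocks (fromBlocks P U V D) (fromRows 0 E) (fromCols 0 F) G =
      (fromBlocks P (fromCols U 0) (fromRows V 0) (fromBlocks D E F G)).submatrix
        (Equiv.sumAssoc l m n) (Equiv.sumAssoc l m n) := by
    ext ((i | i) | i) ((j | j) | j) <;> rfl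
  rw [hassoc, det_submatrix_equiv_self, det_fromBlocks₁₁, fromRows_mul, Matrix.zero_mul,
    fromRows_mul_fromCols, Matrix.mul_zero, sub_eq_add_neg, fromBlocks_neg, fromBlocks_add]
  simp only [Matrix.zero_mul, neg_zero, add_zero, ← sub_eq_add_neg]

def skeletonizer (n : Type*) [DecidableEq n] (T : Matrix m l R) :
    Matrix ((l ⊕ m) ⊕ n) ((l ⊕ m) ⊕ n) R :=
  fromBlocks (fromBlocks 1 0 (-T) 1) 0 0 1

theorem det_skeletonizer (T : Matrix m l R) : (skeletonizer n T).det = 1 := by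
  rw [skeletonizer, det_fromBlocks_zero₂₁, det_fromBlocks_zero₁₂]
  simp only [det_one, mul_one]

theorem skeletonizer_transpose_mul_mul_skeletonizer (A11 : Matrix l l R) (A21 : Matrix m l R)
    (A22 : Matrix m m R) (hA22 : A22ᵀ = A22) (A32 : Matrix n m R) (A33 : Matrix n n R)
    (T : Matrix m l R) :
    (skeletonizer n T)ᵀ * fromBlocks (fromBlocks A11 A21ᵀ A21 A22) (fromRows (A32 * T)ᵀ A32ᵀ)
        (fromCols (A32 * T) A32) A33 * skeletonizer n T =
      fromBlocks
        (fromBlocks (A11 - Tᵀ * A21 - A21ᵀ * T + Tᵀ * A22 * T) (A21 - A22 * T)ᵀ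
          (A21 - A22 * T) A22)
        (fromRows 0 A32ᵀ) (fromCols 0 A32) A33 := by
  simp only [skeletonizer, fromBlocks_transpose, transpose_one, transpose_zero, transpose_neg,
    fromBlocks_multiply, fromBlocks_mul_fromRows, fromCols_mul_fromBlocks, Matrix.mul_one,
    Matrix.one_mul, Matrix.mul_zero, Matrix.zero_mul, add_zero, zero_add, transpose_mul,
    transpose_sub, hA22]
  congr 1
  · congr 1 <;> simp only [Matrix.add_mul, Matrix.mul_neg, Matrix.neg_mul,
      Matrix.mul_assoc, sub_eq_add_neg]
    abel
  · rw [Matrix.neg_mul, add_neg_cancel]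
  · rw [Matrix.mul_neg, add_neg_cancel]

end Matrix

/-- If `A` is symmetric and invertible, `A_qp̌ = A_qp̂ T_p`, and `B_p̌p̌` is invertible,
then the skeletonized Schur complement
`Ā₁ = [[A_p̂p̂ - B_p̂p̌ B_p̌p̌⁻¹ B_p̂p̌ᵀ, A_qp̂ᵀ], [A_qp̂, A_qq]]` is invertible. -/
theorem stmt_13 (a b c : ℕ)
    (A11 : Matrix (Fin a) (Fin a) ℝ)
    (A21 : Matrix (Fin b) (Fin a) ℝ)
    (A22 : Matrix (Fin b) (Fin b) ℝ)
    (A31 : Matrix (Fin c) (Fin a) ℝ)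
    (A32 : Matrix (Fin c) (Fin b) ℝ)
    (A33 : Matrix (Fin c) (Fin c) ℝ)
    (A : Matrix ((Fin a ⊕ Fin b) ⊕ Fin c) ((Fin a ⊕ Fin b) ⊕ Fin c) ℝ)
    (hA : A = fromBlocks (fromBlocks A11 A21ᵀ A21 A22) (fromRows A31ᵀ A32ᵀ)
        (fromCols A31 A32) A33)
    (hsymm : A.IsSymm)
    (Tp : Matrix (Fin b) (Fin a) ℝ)
    (hTp : A31 = A32 * Tp)
    (B11 : Matrix (Fin a) (Fin a) ℝ)
    (hB11 : B11 = A11 - Tpᵀ * A21 - A21ᵀ * Tp + Tpᵀ * A22 * Tp)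
    (B21 : Matrix (Fin b) (Fin a) ℝ)
    (hB21 : B21 = A21 - A22 * Tp)
    (hAunit : IsUnit A) (hB11unit : IsUnit B11)
    (Abar₁ : Matrix (Fin b ⊕ Fin c) (Fin b ⊕ Fin c) ℝ)
    (hAbar₁ : Abar₁ = fromBlocks (A22 - B21 * B11⁻¹ * B21ᵀ) A32ᵀ A32 A33) :
    IsUnit Abar₁ := by
  have hA22 : A22ᵀ = A22 := by
    ext i j
    simpa [hA] using hsymm.apply (Sum.inl (Sum.inr i)) (Sum.inl (Sum.inr j))
  let _ := hB11unit.invertible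
  have hdet : A.det = B11.det * Abar₁.det :=
    calc A.det = ((skeletonizer (Fin c) Tp)ᵀ * A * skeletonizer (Fin c) Tp).det := by
          rw [det_mul, det_mul, det_transpose, det_skeletonizer, one_mul, mul_one]
      _ = B11.det * Abar₁.det := by
          rw [hA, hTp, skeletonizer_transpose_mul_mul_skeletonizer _ _ _ hA22, ← hB11, ← hB21,
            det_fromBlocks_fromBlocks_fromRows_zero, hAbar₁, invOf_eq_nonsing_inv]
  rw [isUnit_iff_isUnit_det] at hAunit ⊢
  exact isUnit_of_mul_isUnit_right (hdet ▸ hAunit)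
end
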